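/- Position-based decoding: Let α, β be finite types, ε ∈ (0,1), ρ a density matrix on α × β with marginals ρ^A = Tr_β ρ and ρ^B = Tr_α ρ, and σ a density matrix on β with the support of ρ^B contained in the support of σ. Suppose Π is a matrix on α × β with 0 ≼ Π ≼ 1 and Tr(Π ρ) ≥ 1 − ε, and let k ∈ ℝ satisfy Tr(Π (ρ^A ⊗ σ)) ≤ 2^{−k}. Set n = ⌈ε · 2^k⌉ and assume n ≥ 1. Then there exist positive semidefinite matrices Λ_1, …, Λ_{n+1} on the space indexed by α × (Fin n → β) such that ∑_{j=1}^{n+1} Λ_j = 1 and, for every j ∈ {1,…,n}, Tr(Λ_j τ_j) ≥ 1 − 6ε, where τ_j((a,x),(a',x')) = ρ((a, x j),(a', x' j)) · ∏_{i ≠ j} σ(x i, x' i). -/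

import Mathlib

open Matrix Kronecker
open scoped ComplexOrder Classical

/-- A density matrix: a positive semidefinite matrix of trace 1. -/
def IsDensityMatrix {n : Type*} [Fintype n] (ρ : Matrix n n ℂ) : Prop :=
  ρ.PosSemidef ∧ ρ.trace = 1

/-- Partial trace over the first tensor factor. -/
noncomputable def ptraceFst {α β : Type*} [Fintype α] (ρ : Matrix (α × β) (α × β) ℂ) : Matrix β β ℂ :=
  Matrix.of fun b b' => ∑ a : α, ρ (a, b) (a, b')

/-- Partial trace over the second tensor factor. -/
noncomputable def ptraceSnd {α β : Type*} [Fintype β] (ρ : Matrix (α × β) (α × β) ℂ) : Matrix α α ℂ :=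
  Matrix.of fun a a' => ∑ b : β, ρ (a, b) (a', b)

/-- The positive semidefinite square root of a matrix (junk value `0` if the matrix is
not positive semidefinite). -/
noncomputable def psdSqrt {n : Type*} [Fintype n] [DecidableEq n] (A : Matrix n n ℂ) :
    Matrix n n ℂ :=
  if hA : A.PosSemidef then
    hA.1.eigenvectorUnitary.1 * diagonal ((↑) ∘ (√·) ∘ hA.1.eigenvalues) *
      (star hA.1.eigenvectorUnitary : Matrix n n ℂ) else 0

/-- Fidelity `F(ρ,σ) = Tr √(√ρ σ √ρ)`. -/
noncomputable def fidelity {n : Type*} [Fintype n] [DecidableEq n] (ρ σ : Matrix n n ℂ) : ℝ :=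
  ((psdSqrt (psdSqrt ρ * σ * psdSqrt ρ)).trace).re

/-- Purified distance `P(ρ,σ) = √(1 − F(ρ,σ)²)`. -/
noncomputable def purifiedDist {n : Type*} [Fintype n] [DecidableEq n]
    (ρ σ : Matrix n n ℂ) : ℝ :=
  Real.sqrt (1 - (fidelity ρ σ) ^ 2)


/-!
Each test `T` is lifted to `Eᵢ`, acting on `α` and the `i`-th copy of `β`, and the decoder is
the square-root measurement `Λⱼ = G^{-1/2} Eⱼ G^{-1/2}` with `G = ∑ Eᵢ + δ`, where
`δ = ε - (n - 1) 2^{-k} > 0` by the choice of `n`; the remaining weight `δ G⁻¹` is the outcome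
"no decision". The Hayashi–Nagaoka operator inequality
`1 - (S + T)^{-1/2} S (S + T)^{-1/2} ≤ 2 (1 - S) + 4 T` bounds the error probability on `τⱼ` by
`2 Tr((1 - Eⱼ) τⱼ) + 4 (∑_{i ≠ j} Tr(Eᵢ τⱼ) + δ)`. On `τⱼ` the test `Eⱼ` sees `ρ`, which it
accepts with probability at least `1 - ε`, while every other `Eᵢ` sees `ρ^A ⊗ σ`, which it
accepts with probability at most `2^{-k}`. Hence the error is at most
`2 ε + 4 ((n - 1) 2^{-k} + δ) = 6 ε`.
-/

open Finset CFC
open scoped Ring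

section CStarAlgebra
variable {A : Type*} [CStarAlgebra A] [PartialOrder A] [StarOrderedRing A]

theorem mul_self_le_self_of_le_one {x : A} (hx : 0 ≤ x) (hx1 : x ≤ 1) : x * x ≤ x := by
  obtain ⟨b, hb, rfl⟩ := CStarAlgebra.nonneg_iff_exists_nonneg_and_eq_mul_self.mp hx
  have h : b * b - b * b * (b * b) = star b * (1 - b * b) * b := by
    rw [hb.star_eq]; noncomm_ring
  exact sub_nonneg.mp (h ▸ star_left_conjugate_nonneg (sub_nonneg.mpr hx1) b)

theorem le_sqrt_self_of_le_one {a : A} (ha : 0 ≤ a) (ha1 : a ≤ 1) : a ≤ sqrt a := by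
  have hs1 : sqrt a ≤ 1 := by simpa using sqrt_le_sqrt a 1 ha1
  simpa [sqrt_mul_sqrt_self a ha] using mul_self_le_self_of_le_one (sqrt_nonneg a) hs1

theorem hayashi_nagaoka {S T : A} (hS : 0 ≤ S) (hS1 : S ≤ 1) (hT : 0 ≤ T)
    (hST : IsUnit (S + T)) :
    1 - (sqrt (S + T))⁻¹ʳ * S * (sqrt (S + T))⁻¹ʳ ≤ 2 • (1 - S) + 4 • T := by
  set Q := sqrt (S + T)
  set N := Q⁻¹ʳ
  have hQQ : Q * Q = S + T := sqrt_mul_sqrt_self _ (add_nonneg hS hT)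
  have hQ : IsUnit Q := ((Commute.refl Q).isUnit_mul_iff.mp (hQQ ▸ hST)).1
  have hNQ : N * Q = 1 := Ring.inverse_mul_cancel Q hQ
  have hQN : Q * N = 1 := Ring.mul_inverse_cancel Q hQ
  have hN : star N = N := (sqrt_nonneg _).isSelfAdjoint.ringInverse.star_eq
  have hSQ : S ≤ Q := (le_sqrt_self_of_le_one hS hS1).trans
    (sqrt_le_sqrt _ _ (le_add_of_nonneg_right hT))
  have hNT : N * T = Q - N * S := by
    rw [eq_sub_iff_add_eq, ← mul_add, add_comm, ← hQQ, ← mul_assoc, hNQ, one_mul]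
  have hTN : T * N = Q - S * N := by
    rw [eq_sub_iff_add_eq, ← add_mul, add_comm, ← hQQ, mul_assoc, hQN, mul_one]
  have hNTN : N * T * N = 1 - N * S * N := by rw [hNT, sub_mul, hQN]
  -- Since `N (S + T) = Q = (S + T) N`, the gap is a sum of conjugates of `T`, `S` and `Q - S`.
  have hgap : 2 • (1 - S) + 4 • T - (1 - N * S * N) =
      star (2 - N) * T * (2 - N) + 2 • (star (1 - N) * S * (1 - N)) + 4 • (Q - S) := by
    have expand : (2 - N) * T * (2 - N) = 4 • T - 2 • (N * T) - 2 • (T * N) + N * T * N := by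
      noncomm_ring
    rw [star_sub, star_sub, star_one, star_ofNat, hN, expand, hNTN, hNT, hTN]
    noncomm_ring
  rw [← sub_nonneg, hgap]
  exact add_nonneg (add_nonneg (star_left_conjugate_nonneg hT _)
    (nsmul_nonneg (star_left_conjugate_nonneg hS _) 2)) (nsmul_nonneg (sub_nonneg.mpr hSQ) 4)

/-- `R` pads `∑ i, E i` to an invertible element; the last outcome `Fin.last n` carries it. -/
noncomputable def sqrtMeasurement {n : ℕ} (E : Fin n → A) (R : A) : Fin (n + 1) → A :=
  fun l => (sqrt (∑ i, E i + R))⁻¹ʳ * Fin.lastCases R E l * (sqrt (∑ i, E i + R))⁻¹ʳ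

variable {n : ℕ} {E : Fin n → A} {R : A}

theorem sqrtMeasurement_nonneg (hE : ∀ i, 0 ≤ E i) (hR : 0 ≤ R) (l : Fin (n + 1)) :
    0 ≤ sqrtMeasurement E R l := by
  have hN := (sqrt_nonneg (∑ i, E i + R)).isSelfAdjoint.ringInverse.star_eq
  have hl : 0 ≤ (Fin.lastCases R E l : A) := by induction l using Fin.lastCases <;> simp [hR, hE]
  simpa only [hN, sqrtMeasurement] using star_left_conjugate_nonneg hl (sqrt (∑ i, E i + R))⁻¹ʳ

theorem sum_sqrtMeasurement (hE : ∀ i, 0 ≤ E i) (hR : IsStrictlyPositive R) :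
    ∑ l, sqrtMeasurement E R l = 1 := by
  have hG : IsStrictlyPositive (∑ i, E i + R) := hR.nonneg_add (sum_nonneg fun i _ => hE i)
  have hQ : IsUnit (sqrt (∑ i, E i + R)) := isUnit_sqrt_iff_isStrictlyPositive.mpr hG
  have hQQ := sqrt_mul_sqrt_self _ hG.nonneg
  simp only [sqrtMeasurement]
  set Q := sqrt (∑ i, E i + R)
  rw [Fin.sum_univ_castSucc]
  simp only [Fin.lastCases_castSucc, Fin.lastCases_last, ← sum_mul, ← mul_sum, ← add_mul,
    ← mul_add]
  rw [← hQQ, ← mul_assoc, Ring.inverse_mul_cancel Q hQ, one_mul, Ring.mul_inverse_cancel Q hQ]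

theorem one_sub_sqrtMeasurement_le (hE : ∀ i, 0 ≤ E i) (hE1 : ∀ i, E i ≤ 1)
    (hR : IsStrictlyPositive R) (j : Fin n) :
    1 - sqrtMeasurement E R j.castSucc ≤ 2 • (1 - E j) + 4 • (∑ i ∈ univ.erase j, E i + R) := by
  have hsplit : ∑ i, E i + R = E j + (∑ i ∈ univ.erase j, E i + R) := by
    rw [← add_assoc, add_sum_erase _ _ (mem_univ j)]
  have hrest : 0 ≤ ∑ i ∈ univ.erase j, E i + R :=
    add_nonneg (sum_nonneg fun i _ => hE i) hR.nonneg
  have hG : IsUnit (∑ i, E i + R) := (hR.nonneg_add (sum_nonneg fun i _ => hE i)).isUnit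
  rw [hsplit] at hG
  simpa only [sqrtMeasurement, Fin.lastCases_castSucc, hsplit] using
    hayashi_nagaoka (hE j) (hE1 j) hrest hG

end CStarAlgebra

section MatrixOrder
open scoped MatrixOrder Matrix.Norms.L2Operator
variable {m : Type*} [Fintype m] [DecidableEq m]

theorem re_trace_mul_le_of_le {X Y τ : Matrix m m ℂ} (hXY : X ≤ Y) (hτ : 0 ≤ τ) :
    (X * τ).trace.re ≤ (Y * τ).trace.re := by
  obtain ⟨c, rfl⟩ := CStarAlgebra.nonneg_iff_eq_star_mul_self.mp hτ
  have h : 0 ≤ ((Y - X) * (star c * c)).trace := by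
    rw [← mul_assoc, trace_mul_comm, ← mul_assoc]
    exact (nonneg_iff_posSemidef.mp
      (star_right_conjugate_nonneg (sub_nonneg.mpr hXY) c)).trace_nonneg
  simpa [sub_mul] using Complex.re_le_re h

theorem exists_povm_of_hayashi_nagaoka {n : ℕ} (E : Fin n → Matrix m m ℂ)
    (hE : ∀ i, (E i).PosSemidef) (hE1 : ∀ i, (1 - E i).PosSemidef) {δ : ℝ} (hδ : 0 < δ) :
    ∃ Λ : Fin (n + 1) → Matrix m m ℂ, (∀ l, (Λ l).PosSemidef) ∧ ∑ l, Λ l = 1 ∧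
      ∀ (j : Fin n) (τ : Matrix m m ℂ), τ.PosSemidef → τ.trace = 1 →
        1 - 2 * (1 - (E j * τ).trace.re) - 4 * (∑ i ∈ univ.erase j, (E i * τ).trace.re + δ) ≤
          (Λ j.castSucc * τ).trace.re := by
  have hE0 : ∀ i, 0 ≤ E i := fun i => (hE i).nonneg
  have hE_le : ∀ i, E i ≤ 1 := fun i => le_iff.mpr (hE1 i)
  have hR : IsStrictlyPositive (δ • (1 : Matrix m m ℂ)) :=
    IsStrictlyPositive.smul hδ isStrictlyPositive_one
  refine ⟨sqrtMeasurement E (δ • 1), fun l => nonneg_iff_posSemidef.mp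
    (sqrtMeasurement_nonneg hE0 hR.nonneg l), sum_sqrtMeasurement hE0 hR, fun j τ hτ hτ1 => ?_⟩
  have h := re_trace_mul_le_of_le (one_sub_sqrtMeasurement_le hE0 hE_le hR j) hτ.nonneg
  simp only [sub_mul, add_mul, smul_mul_assoc, one_mul, trace_sub, trace_add, trace_smul, sum_mul,
    trace_sum, hτ1] at h
  simp only [Complex.smul_re, Complex.sub_re, Complex.add_re, Complex.one_re,
    Complex.re_sum] at h
  simp only [nsmul_eq_mul, smul_eq_mul, mul_one, Nat.cast_ofNat] at h
  linarith

end MatrixOrder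

theorem Finset.prod_ite_eq_mul_prod_erase {ι M : Type*} [DecidableEq ι] [CommMonoid M]
    {s : Finset ι} {j : ι} (hj : j ∈ s) (f g : ι → M) :
    ∏ i ∈ s, (if i = j then f i else g i) = f j * ∏ i ∈ s.erase j, g i := by
  rw [← mul_prod_erase s _ hj, if_pos rfl]
  exact congrArg _ (Finset.prod_congr rfl fun i hi => if_neg (ne_of_mem_erase hi))

section liftAt
variable {α β ι : Type*} [Fintype ι] [DecidableEq ι]

noncomputable def liftAt (j : ι) (M : Matrix (α × β) (α × β) ℂ) (A : Matrix β β ℂ) :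
    Matrix (α × (ι → β)) (α × (ι → β)) ℂ :=
  of fun p q => M (p.1, p.2 j) (q.1, q.2 j) * ∏ i ∈ univ.erase j, A (p.2 i) (q.2 i)

theorem liftAt_apply (j : ι) (M : Matrix (α × β) (α × β) ℂ) (A : Matrix β β ℂ) (a a' : α)
    (x x' : ι → β) :
    liftAt j M A (a, x) (a', x') =
      ∏ i, if i = j then M (a, x i) (a', x' i) else A (x i) (x' i) := by
  rw [prod_ite_eq_mul_prod_erase (mem_univ j)]; rfl

theorem conjTranspose_liftAt (j : ι) (M : Matrix (α × β) (α × β) ℂ) (A : Matrix β β ℂ) :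
    (liftAt j M A)ᴴ = liftAt j Mᴴ Aᴴ := by
  ext ⟨a, x⟩ ⟨a', x'⟩
  simp only [conjTranspose_apply, liftAt_apply, star_prod, apply_ite star]

theorem liftAt_one [DecidableEq α] [DecidableEq β] (j : ι) :
    liftAt j (1 : Matrix (α × β) (α × β) ℂ) (1 : Matrix β β ℂ) = 1 := by
  ext ⟨a, x⟩ ⟨a', x'⟩
  rw [liftAt_apply, one_apply]
  split_ifs with h
  · obtain ⟨rfl, rfl⟩ := Prod.mk.inj h
    simp
  · simp only [Prod.mk.injEq, not_and_or, funext_iff, not_forall] at h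
    rcases h with ha | ⟨i, hi⟩
    · exact prod_eq_zero (mem_univ j) (by simp [ha])
    · exact prod_eq_zero (mem_univ i) (by split_ifs <;> simp [hi])

theorem liftAt_sub (j : ι) (M M' : Matrix (α × β) (α × β) ℂ) (A : Matrix β β ℂ) :
    liftAt j (M - M') A = liftAt j M A - liftAt j M' A := by
  ext p q
  simp [liftAt, sub_mul]

variable [Fintype α] [Fintype β]

theorem liftAt_mul (j : ι) (M M' : Matrix (α × β) (α × β) ℂ) (A A' : Matrix β β ℂ) :
    liftAt j M A * liftAt j M' A' = liftAt j (M * M') (A * A') := by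
  ext ⟨a, x⟩ ⟨a', x'⟩
  have h : ∀ c, ∑ y : ι → β, liftAt j M A (a, x) (c, y) * liftAt j M' A' (c, y) (a', x') =
      (∑ b, M (a, x j) (c, b) * M' (c, b) (a', x' j)) *
        ∏ i ∈ univ.erase j, (A * A') (x i) (x' i) := by
    intro c
    calc _ = ∏ i, ∑ b, (if i = j then M (a, x i) (c, b) else A (x i) b) *
          (if i = j then M' (c, b) (a', x' i) else A' b (x' i)) := by
          simp only [liftAt_apply, ← prod_mul_distrib, Fintype.prod_sum]
      _ = ∏ i, if i = j then ∑ b, M (a, x i) (c, b) * M' (c, b) (a', x' i)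
            else (A * A') (x i) (x' i) := by
          refine Finset.prod_congr rfl fun i _ => ?_
          split_ifs <;> rfl
      _ = _ := prod_ite_eq_mul_prod_erase (mem_univ j) _ _
  rw [mul_apply, Fintype.sum_prod_type]
  simp only [h, ← sum_mul]
  simp only [liftAt, of_apply, mul_apply, Fintype.sum_prod_type]

theorem trace_liftAt (j : ι) (M : Matrix (α × β) (α × β) ℂ) (A : Matrix β β ℂ) :
    (liftAt j M A).trace = M.trace * A.trace ^ (Fintype.card ι - 1) := by
  have h : ∀ a, ∑ x : ι → β, liftAt j M A (a, x) (a, x) =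
      (∑ b, M (a, b) (a, b)) * A.trace ^ (Fintype.card ι - 1) := by
    intro a
    calc _ = ∏ i, ∑ b, (if i = j then M (a, b) (a, b) else A b b) := by
          simp only [liftAt_apply, Fintype.prod_sum]
      _ = ∏ i, if i = j then ∑ b, M (a, b) (a, b) else A.trace := by
          simp only [Finset.sum_ite_irrel]; rfl
      _ = _ := by
          rw [prod_ite_eq_mul_prod_erase (mem_univ j), prod_const, card_erase_of_mem (mem_univ j),
            card_univ]
  simp only [trace, diag_apply, Fintype.sum_prod_type, h, ← sum_mul]

theorem trace_liftAt_one_mul_liftAt [DecidableEq β] (j : ι) (M ρ : Matrix (α × β) (α × β) ℂ)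
    (σ : Matrix β β ℂ) :
    (liftAt j M 1 * liftAt j ρ σ).trace = (M * ρ).trace * σ.trace ^ (Fintype.card ι - 1) := by
  rw [liftAt_mul, trace_liftAt, one_mul]

theorem trace_liftAt_one_mul_liftAt_of_ne [DecidableEq β] {i j : ι} (hij : i ≠ j)
    (M ρ : Matrix (α × β) (α × β) ℂ) (σ : Matrix β β ℂ) :
    (liftAt i M 1 * liftAt j ρ σ).trace =
      (M * (ptraceSnd ρ ⊗ₖ σ)).trace * σ.trace ^ (Fintype.card ι - 2) := by
  have h : ∀ a a', ∑ x : ι → β, ∑ x' : ι → β,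
      liftAt i M 1 (a, x) (a', x') * liftAt j ρ σ (a', x') (a, x) =
      (∑ b, ∑ b', M (a, b) (a', b') * σ b' b) *
        (ptraceSnd ρ a' a * σ.trace ^ (Fintype.card ι - 2)) := by
    intro a a'
    -- the sum over pairs of configurations factorises over the coordinates `k`
    calc _ = ∏ k, ∑ b, ∑ b', (if k = i then M (a, b) (a', b') else (1 : Matrix β β ℂ) b b') *
          (if k = j then ρ (a', b') (a, b) else σ b' b) := by
          simp only [liftAt_apply, ← prod_mul_distrib, Fintype.prod_sum]
      _ = ∏ k, if k = i then ∑ b, ∑ b', M (a, b) (a', b') * σ b' b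
            else if k = j then ptraceSnd ρ a' a else σ.trace := by
          refine Finset.prod_congr rfl fun k _ => ?_
          rcases eq_or_ne k i with rfl | hki
          · simp [hij]
          rcases eq_or_ne k j with rfl | hkj
          · simp only [hki, if_true, if_false, Matrix.one_apply, ite_mul, one_mul, zero_mul,
              Finset.sum_ite_eq, mem_univ]
            rfl
          · simp only [hki, hkj, if_false, Matrix.one_apply, ite_mul, one_mul, zero_mul,
              Finset.sum_ite_eq, mem_univ]
            rfl
      _ = _ := by
          have hj : j ∈ univ.erase i := mem_erase.mpr ⟨hij.symm, mem_univ j⟩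
          rw [prod_ite_eq_mul_prod_erase (mem_univ i), prod_ite_eq_mul_prod_erase hj, prod_const,
            card_erase_of_mem hj, card_erase_of_mem (mem_univ i), card_univ, Nat.sub_sub]
  conv_lhs => rw [trace]
  conv_rhs => rw [trace]
  simp only [diag_apply, mul_apply, Fintype.sum_prod_type, kroneckerMap_apply]
  refine (Fintype.sum_congr _ _ fun a => Finset.sum_comm).trans ?_
  simp only [h, Finset.sum_mul]
  refine Fintype.sum_congr _ _ fun a => ?_
  rw [Finset.sum_comm]
  refine Fintype.sum_congr _ _ fun b => Fintype.sum_congr _ _ fun a' =>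
    Fintype.sum_congr _ _ fun b' => ?_
  ring

open scoped MatrixOrder in
theorem posSemidef_liftAt (j : ι) {M : Matrix (α × β) (α × β) ℂ} {A : Matrix β β ℂ}
    (hM : M.PosSemidef) (hA : A.PosSemidef) : (liftAt j M A).PosSemidef := by
  obtain ⟨B, rfl⟩ := CStarAlgebra.nonneg_iff_eq_star_mul_self.mp hM.nonneg
  obtain ⟨C, rfl⟩ := CStarAlgebra.nonneg_iff_eq_star_mul_self.mp hA.nonneg
  rw [star_eq_conjTranspose, star_eq_conjTranspose, ← liftAt_mul, ← conjTranspose_liftAt]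
  exact posSemidef_conjTranspose_mul_self _

theorem posSemidef_one_sub_liftAt [DecidableEq α] [DecidableEq β] (j : ι)
    {M : Matrix (α × β) (α × β) ℂ} (hM : (1 - M).PosSemidef) : (1 - liftAt j M 1).PosSemidef := by
  rw [← liftAt_one j, ← liftAt_sub]
  exact posSemidef_liftAt j hM .one

end liftAt

theorem ceil_sub_one_mul_inv_lt {ε c : ℝ} (hε : 0 ≤ ε) (hc : 0 < c) :
    ((⌈ε * c⌉₊ : ℝ) - 1) * c⁻¹ < ε := by
  rw [← div_eq_mul_inv, div_lt_iff₀ hc]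
  linarith [Nat.ceil_lt_add_one (mul_nonneg hε hc.le)]

theorem position_based_decoding_general {α β : Type*} [Fintype α] [DecidableEq α]
    [Fintype β] [DecidableEq β]
    (ε : ℝ) (hε0 : 0 < ε)
    (ρ : Matrix (α × β) (α × β) ℂ) (σ : Matrix β β ℂ)
    (hρ : IsDensityMatrix ρ) (hσ : IsDensityMatrix σ)
    (T : Matrix (α × β) (α × β) ℂ) (hT0 : T.PosSemidef) (hT1 : (1 - T).PosSemidef)
    (hTρ : 1 - ε ≤ ((T * ρ).trace).re)
    (k : ℝ) (hk : ((T * (ptraceSnd ρ ⊗ₖ σ)).trace).re ≤ (2:ℝ) ^ (-k))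
    (n : ℕ) (hn : n = ⌈ε * (2:ℝ) ^ k⌉₊) :
    ∃ Λ : Fin (n + 1) → Matrix (α × (Fin n → β)) (α × (Fin n → β)) ℂ,
      (∀ j, (Λ j).PosSemidef) ∧ (∑ j, Λ j = 1) ∧
      ∀ j : Fin n, 1 - 6 * ε ≤
        ((Λ j.castSucc * Matrix.of (fun p q : α × (Fin n → β) =>
            ρ (p.1, p.2 j) (q.1, q.2 j) *
              ∏ i ∈ Finset.univ.erase j, σ (p.2 i) (q.2 i))).trace).re := by
  obtain ⟨hρ0, hρ1⟩ := hρ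
  obtain ⟨hσ0, hσ1⟩ := hσ
  have hδ : 0 < ε - (n - 1) * (2:ℝ) ^ (-k) := by
    rw [hn, Real.rpow_neg zero_le_two]
    exact sub_pos.mpr (ceil_sub_one_mul_inv_lt hε0.le (by positivity))
  obtain ⟨Λ, hΛ0, hΛ1, hΛ⟩ := exists_povm_of_hayashi_nagaoka (fun i => liftAt i T 1)
    (fun i => posSemidef_liftAt i hT0 .one) (fun i => posSemidef_one_sub_liftAt i hT1) hδ
  refine ⟨Λ, hΛ0, hΛ1, fun j => ?_⟩
  change _ ≤ (Λ j.castSucc * liftAt j ρ σ).trace.re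
  have hcross : ∀ i ∈ univ.erase j,
      (liftAt i T 1 * liftAt j ρ σ).trace.re = (T * (ptraceSnd ρ ⊗ₖ σ)).trace.re := fun i hi => by
    rw [trace_liftAt_one_mul_liftAt_of_ne (ne_of_mem_erase hi), hσ1, one_pow, mul_one]
  have hbound := hΛ j (liftAt j ρ σ) (posSemidef_liftAt j hρ0 hσ0)
    (by rw [trace_liftAt, hρ1, hσ1, one_pow, mul_one])
  rw [trace_liftAt_one_mul_liftAt, hσ1, one_pow, mul_one, sum_congr rfl hcross, sum_const,
    card_erase_of_mem (mem_univ j), card_univ, Fintype.card_fin, nsmul_eq_mul,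
    Nat.cast_pred j.pos] at hbound
  have hn1 : 0 ≤ (n : ℝ) - 1 := sub_nonneg.mpr (Nat.one_le_cast.mpr j.pos)
  linarith [mul_le_mul_of_nonneg_left hk hn1]

/-- Position-based decoding. -/
theorem position_based_decoding {α β : Type*} [Fintype α] [DecidableEq α]
    [Fintype β] [DecidableEq β]
    (ε : ℝ) (hε0 : 0 < ε) (hε1 : ε < 1)
    (ρ : Matrix (α × β) (α × β) ℂ) (σ : Matrix β β ℂ)
    (hρ : IsDensityMatrix ρ) (hσ : IsDensityMatrix σ)
    (hsupp : ∀ v : β → ℂ, σ.mulVec v = 0 → (ptraceFst ρ).mulVec v = 0)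
    (T : Matrix (α × β) (α × β) ℂ) (hT0 : T.PosSemidef) (hT1 : (1 - T).PosSemidef)
    (hTρ : 1 - ε ≤ ((T * ρ).trace).re)
    (k : ℝ) (hk : ((T * (ptraceSnd ρ ⊗ₖ σ)).trace).re ≤ (2:ℝ) ^ (-k))
    (n : ℕ) (hn : n = ⌈ε * (2:ℝ) ^ k⌉₊) (hn1 : 1 ≤ n) :
    ∃ Λ : Fin (n + 1) → Matrix (α × (Fin n → β)) (α × (Fin n → β)) ℂ,
      (∀ j, (Λ j).PosSemidef) ∧ (∑ j, Λ j = 1) ∧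
      ∀ j : Fin n, 1 - 6 * ε ≤
        ((Λ j.castSucc * Matrix.of (fun p q : α × (Fin n → β) =>
            ρ (p.1, p.2 j) (q.1, q.2 j) *
              ∏ i ∈ Finset.univ.erase j, σ (p.2 i) (q.2 i))).trace).re :=
  position_based_decoding_general ε hε0 ρ σ hρ hσ T hT0 hT1 hTρ k hk n hn
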